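/- arXiv:2402.15310 — 6 statements merged into one kernel-verified Lean document; each statement's English description precedes it below -/
import Mathlib

section
/- Let ν ≤ ν' be Newton vectors in ℚⁿ. Then 2·𝐀(ν,ν') = 2·𝐢(ν,ν') + 𝐛₁(ν,ν') + 𝐛₂(ν,ν'). (This is Pick's theorem applied to the region between the two Newton polygons: 𝐀 is its area, 𝐢 the number of interior lattice points, and 𝐛₁, 𝐛₂ the numbers of lattice points on the lower, respectively upper, polygon that do not lie on the other polygon; lattice points common to both polygons are not counted.) -/
/-- Partial sum `P_ν(j) = ν₁ + ⋯ + ν_j` (0-indexed entries `ν 0, …, ν (n-1)`). -/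
def newtonP (ν : ℕ → ℚ) (j : ℕ) : ℚ := ∑ k ∈ Finset.range j, ν k

/-- A rational number is an integer. -/
def IsIntQ (q : ℚ) : Prop := ∃ m : ℤ, (m : ℚ) = q

/-- `ν` is a Newton vector (of length `n`): weakly decreasing, integral total sum, and
integral partial sum at every breakpoint (so the Newton polygon has lattice vertices). -/
def IsNewton (n : ℕ) (ν : ℕ → ℚ) : Prop :=
  (∀ k, k + 1 < n → ν (k + 1) ≤ ν k) ∧
  IsIntQ (newtonP ν n) ∧
  ∀ j, 1 ≤ j → j ≤ n - 1 → ν (j - 1) ≠ ν j → IsIntQ (newtonP ν j)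

/-- The dominance order `ν ≤ ν'` on Newton vectors. -/
def NewtonLE (n : ℕ) (ν ν' : ℕ → ℚ) : Prop :=
  newtonP ν n = newtonP ν' n ∧ ∀ j, 1 ≤ j → j ≤ n - 1 → newtonP ν j ≤ newtonP ν' j

/-- `𝐢(ν,ν')`: the number of lattice points strictly between the two Newton polygons. -/
noncomputable def nI (n : ℕ) (ν ν' : ℕ → ℚ) : ℕ :=
  Set.ncard {p : ℕ × ℤ | 1 ≤ p.1 ∧ p.1 ≤ n - 1 ∧
    newtonP ν p.1 < (p.2 : ℚ) ∧ (p.2 : ℚ) < newtonP ν' p.1}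

/-- `𝐛₁(ν,ν')`: lattice points on the lower polygon not lying on the upper one. -/
noncomputable def nB1 (n : ℕ) (ν ν' : ℕ → ℚ) : ℕ :=
  Set.ncard {j : ℕ | 1 ≤ j ∧ j ≤ n - 1 ∧ IsIntQ (newtonP ν j) ∧ newtonP ν j < newtonP ν' j}

/-- `𝐛₂(ν,ν')`: lattice points on the upper polygon not lying on the lower one. -/
noncomputable def nB2 (n : ℕ) (ν ν' : ℕ → ℚ) : ℕ :=
  Set.ncard {j : ℕ | 1 ≤ j ∧ j ≤ n - 1 ∧ IsIntQ (newtonP ν' j) ∧ newtonP ν j < newtonP ν' j}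

/-- `𝐀(ν,ν') = Σ_{j=1}^{n-1} (P_{ν'}(j) − P_ν(j))`, the area between the polygons. -/
def nA (n : ℕ) (ν ν' : ℕ → ℚ) : ℚ :=
  ∑ j ∈ Finset.Icc 1 (n - 1), (newtonP ν' j - newtonP ν j)

/-!
Count the region column by column. For rationals `x ≤ y`, the quantity
`2 (y - x) - 2 #(ℤ ∩ (x, y)) - [x ∈ ℤ, x < y] - [y ∈ ℤ, x < y]` equals `s y - s x`, where `s` is
twice Dedekind's sawtooth. Summing over the columns `1 ≤ j ≤ n - 1`, it remains to see that
`∑ⱼ s (P_ν(j)) = 0` for every Newton vector `ν`, and this holds edge by edge: between consecutive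
lattice vertices `p < q` the polygon is affine, so `j ↦ p + q - j` pairs its values into sums
that are integers, and `s` is odd modulo `ℤ`.
-/

open Finset

lemma IsIntQ.add {x y : ℚ} (hx : IsIntQ x) (hy : IsIntQ y) : IsIntQ (x + y) := by
  obtain ⟨a, rfl⟩ := hx
  obtain ⟨b, rfl⟩ := hy
  exact ⟨a + b, by push_cast; rfl⟩

lemma ceil_eq_floor_add_ite (x : ℚ) [Decidable (IsIntQ x)] :
    (⌈x⌉ : ℚ) = ⌊x⌋ + if IsIntQ x then 0 else 1 := by
  split_ifs with h
  · obtain ⟨m, rfl⟩ := h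
    simp
  · rw [(Int.ceil_eq_floor_add_one_iff_notMem x).2 h]
    push_cast
    ring

/-- Twice Dedekind's sawtooth `((x))`: zero at integers and `2 * Int.fract x - 1` elsewhere. -/
def sawtooth (x : ℚ) : ℚ := 2 * x - ⌊x⌋ - ⌈x⌉

lemma sawtooth_intCast_sub (m : ℤ) (x : ℚ) : sawtooth (m - x) = -sawtooth x := by
  simp only [sawtooth, sub_eq_add_neg (m : ℚ), Int.floor_intCast_add, Int.ceil_intCast_add,
    Int.floor_neg, Int.ceil_neg]
  push_cast
  ring

lemma IsIntQ.sawtooth_sub {m : ℚ} (hm : IsIntQ m) (x : ℚ) : sawtooth (m - x) = -sawtooth x := by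
  obtain ⟨m, rfl⟩ := hm
  exact sawtooth_intCast_sub m x

lemma IsIntQ.sawtooth_eq_zero {x : ℚ} (hx : IsIntQ x) : sawtooth x = 0 := by
  obtain ⟨m, rfl⟩ := hx
  simp only [sawtooth, Int.floor_intCast, Int.ceil_intCast]
  ring

lemma sum_range_sawtooth_eq_zero {f : ℕ → ℚ} {L : ℕ} (h : ∀ k ≤ L, IsIntQ (f k + f (L - k))) :
    ∑ k ∈ range (L + 1), sawtooth (f k) = 0 := by
  have hodd : ∑ k ∈ range (L + 1), sawtooth (f (L + 1 - 1 - k)) =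
      -∑ k ∈ range (L + 1), sawtooth (f k) := by
    rw [← sum_neg_distrib]
    refine sum_congr rfl fun k hk => ?_
    rw [Nat.add_sub_cancel, ← add_sub_cancel_left (f k) (f (L - k)),
      (h k (Nat.lt_succ_iff.1 (mem_range.1 hk))).sawtooth_sub]
  linarith [sum_range_reflect (fun k => sawtooth (f k)) (L + 1)]

lemma eq_add_mul_of_add_eq_two_mul {f : ℕ → ℚ} {q : ℕ}
    (hf : ∀ j, 0 < j → j < q → f (j - 1) + f (j + 1) = 2 * f j) :
    ∀ j ≤ q, f j = f 0 + j * (f 1 - f 0) := by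
  have hstep : ∀ i < q, f (i + 1) - f i = f 1 - f 0 := by
    intro i hi
    induction i with
    | zero => rfl
    | succ i ih =>
      have := hf (i + 1) i.succ_pos hi
      rw [Nat.add_sub_cancel] at this
      linarith [ih (by omega)]
  intro j hj
  have htele := sum_range_sub f j
  rw [sum_congr rfl fun i hi => hstep i ((mem_range.1 hi).trans_le hj), sum_const, card_range,
    nsmul_eq_mul] at htele
  linarith

theorem sum_range_sawtooth_eq_zero_of_isIntQ_or_midpoint (n : ℕ) {f : ℕ → ℚ}
    (h0 : IsIntQ (f 0)) (hn : IsIntQ (f n))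
    (hf : ∀ j, 0 < j → j < n → ¬IsIntQ (f j) → f (j - 1) + f (j + 1) = 2 * f j) :
    ∑ j ∈ range n, sawtooth (f j) = 0 := by
  induction n using Nat.strong_induction_on generalizing f with
  | _ n ih =>
    rcases Nat.eq_zero_or_pos n with rfl | hpos
    · simp
    classical
    have hex : ∃ q, 0 < q ∧ IsIntQ (f q) := ⟨n, hpos, hn⟩
    obtain ⟨hq0, hq⟩ := Nat.find_spec hex
    set q := Nat.find hex
    have hqn : q ≤ n := Nat.find_min' hex ⟨hpos, hn⟩
    have haff := eq_add_mul_of_add_eq_two_mul (q := q) fun j hj hjq =>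
      hf j hj (hjq.trans_le hqn) fun hint => Nat.find_min hex hjq ⟨hj, hint⟩
    have hedge : ∑ j ∈ range q, sawtooth (f j) = 0 := by
      have hsym : ∀ k ≤ q, IsIntQ (f k + f (q - k)) := by
        intro k hk
        have : f k + f (q - k) = f 0 + f q := by
          rw [haff k hk, haff (q - k) (Nat.sub_le q k), haff q le_rfl, Nat.cast_sub hk]
          ring
        rw [this]
        exact h0.add hq
      simpa [sum_range_succ, hq.sawtooth_eq_zero] using sum_range_sawtooth_eq_zero hsym
    have hrest : ∑ j ∈ range (n - q), sawtooth (f (q + j)) = 0 := by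
      refine ih (n - q) (by omega) (f := fun j => f (q + j)) (by simpa using hq)
        (by rwa [Nat.add_sub_cancel' hqn]) fun j hj hjn hint => ?_
      have := hf (q + j) (by omega) (by omega) hint
      rwa [Nat.add_sub_assoc hj, add_assoc] at this
    rw [← Nat.add_sub_cancel' hqn, sum_range_add, hedge, hrest, add_zero]

lemma newtonP_sub_one_add_newtonP_add_one (ν : ℕ → ℚ) {j : ℕ} (hj : 0 < j) :
    newtonP ν (j - 1) + newtonP ν (j + 1) = 2 * newtonP ν j + (ν j - ν (j - 1)) := by
  obtain ⟨i, rfl⟩ := Nat.exists_eq_add_of_lt hj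
  simp only [newtonP, zero_add, Nat.add_sub_cancel, sum_range_succ]
  ring

theorem IsNewton.sum_sawtooth_eq_zero {n : ℕ} {ν : ℕ → ℚ} (hν : IsNewton n ν) :
    ∑ j ∈ Icc 1 (n - 1), sawtooth (newtonP ν j) = 0 := by
  have hsum := sum_range_sawtooth_eq_zero_of_isIntQ_or_midpoint n (f := newtonP ν)
    ⟨0, by simp [newtonP]⟩ hν.2.1 fun j hj hjn hint => by
      have hflat : ν (j - 1) = ν j := by_contra fun hne => hint (hν.2.2 j hj (by omega) hne)
      rw [newtonP_sub_one_add_newtonP_add_one ν hj, hflat, sub_self, add_zero]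
  have hIcc : Icc 1 (n - 1) = (range n).erase 0 := by
    ext j
    simp only [mem_Icc, mem_erase, mem_range]
    omega
  rwa [hIcc, sum_erase _ (by simp [newtonP, sawtooth])]

lemma two_mul_sub_eq_card_Ioo_add {x y : ℚ} (hxy : x ≤ y) [Decidable (IsIntQ x)]
    [Decidable (IsIntQ y)] :
    2 * (y - x) = 2 * ((Ioo ⌊x⌋ ⌈y⌉).card : ℚ) + (if IsIntQ x ∧ x < y then 1 else 0) +
      (if IsIntQ y ∧ x < y then 1 else 0) + (sawtooth y - sawtooth x) := by
  rcases hxy.eq_or_lt with rfl | hlt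
  · have hempty : (Ioo ⌊x⌋ ⌈x⌉).card = 0 := by
      rw [Int.card_Ioo, Int.toNat_eq_zero]
      linarith [Int.ceil_le_floor_add_one x]
    simp [hempty]
  · have hcard : ((Ioo ⌊x⌋ ⌈y⌉).card : ℚ) = ⌈y⌉ - ⌊x⌋ - 1 := by
      rw [Int.card_Ioo, ← Int.cast_natCast,
        Int.toNat_of_nonneg (by linarith [Int.floor_lt_ceil_of_lt hlt])]
      push_cast
      ring
    simp only [hlt, and_true]
    rw [hcard, sawtooth, sawtooth, ceil_eq_floor_add_ite x, ceil_eq_floor_add_ite y]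
    split_ifs <;> ring

lemma ncard_setOf_Icc_and (m : ℕ) (p : ℕ → Prop) [DecidablePred p] :
    ({j | 1 ≤ j ∧ j ≤ m ∧ p j}.ncard : ℚ) = ∑ j ∈ Icc 1 m, if p j then 1 else 0 := by
  rw [← natCast_card_filter, ← Set.ncard_coe_finset]
  congr 3
  ext j
  simp [and_assoc]

lemma ncard_setOf_lattice_points_between (m : ℕ) (f g : ℕ → ℚ) :
    {p : ℕ × ℤ | 1 ≤ p.1 ∧ p.1 ≤ m ∧ f p.1 < p.2 ∧ (p.2 : ℚ) < g p.1}.ncard =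
      ∑ j ∈ Icc 1 m, (Ioo ⌊f j⌋ ⌈g j⌉).card := by
  have hset : {p : ℕ × ℤ | 1 ≤ p.1 ∧ p.1 ≤ m ∧ f p.1 < p.2 ∧ (p.2 : ℚ) < g p.1} =
      ((Icc 1 m).sigma fun j => Ioo ⌊f j⌋ ⌈g j⌉).map (Equiv.sigmaEquivProd ℕ ℤ).toEmbedding := by
    ext ⟨j, z⟩
    simp [Int.floor_lt, Int.lt_ceil, and_assoc]
  rw [hset, Set.ncard_coe_finset, card_map, card_sigma]

theorem pick_newton_polygons_general (n : ℕ) (ν ν' : ℕ → ℚ)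
    (hν : IsNewton n ν) (hν' : IsNewton n ν') (hle : NewtonLE n ν ν') :
    2 * nA n ν ν' = 2 * (nI n ν ν' : ℚ) + (nB1 n ν ν' : ℚ) + (nB2 n ν ν' : ℚ) := by
  classical
  have hcolumn := fun j (hj : j ∈ Icc 1 (n - 1)) =>
    two_mul_sub_eq_card_Ioo_add (hle.2 j (mem_Icc.1 hj).1 (mem_Icc.1 hj).2)
  rw [nA, mul_sum, sum_congr rfl hcolumn, nI, ncard_setOf_lattice_points_between, nB1,
    ncard_setOf_Icc_and, nB2, ncard_setOf_Icc_and]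
  simp only [sum_add_distrib, sum_sub_distrib, hν.sum_sawtooth_eq_zero,
    hν'.sum_sawtooth_eq_zero, mul_sum, Nat.cast_sum]
  ring

/-- **Pick's theorem for Newton polygons** (Statement 0): for Newton vectors `ν ≤ ν'` in ℚⁿ,
`2·𝐀(ν,ν') = 2·𝐢(ν,ν') + 𝐛₁(ν,ν') + 𝐛₂(ν,ν')`. -/
theorem pick_newton_polygons (n : ℕ) (hn : 1 ≤ n) (ν ν' : ℕ → ℚ)
    (hν : IsNewton n ν) (hν' : IsNewton n ν') (hle : NewtonLE n ν ν') :
    2 * nA n ν ν' = 2 * (nI n ν ν' : ℚ) + (nB1 n ν ν' : ℚ) + (nB2 n ν ν' : ℚ) :=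
  pick_newton_polygons_general n ν ν' hν hν' hle
end

section
/- Let ν ≤ ν' be Newton vectors in ℚⁿ. Then 2·𝐀(ν,ν') − Σ_{j=1}^{n−1} (⌊P_{ν'}(j)⌋ − ⌊P_ν(j)⌋) = 𝐢(ν,ν') + 𝐛₁(ν,ν'). (For GL_n the left-hand side is the essential gap Ess-gap([b],[b']) = ⟨ν'−ν, 2ρ⟩ − length([b],[b']) of the corresponding σ-conjugacy classes; so Ess-gap([b],[b']) = 𝐢 + 𝐛₁.) -/
/-!
For `a ≤ b` the integer `⌈b⌉ - ⌈a⌉` counts the `m ∈ ℤ` with `a ≤ m < b`: these are the lattice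
points of column `j` counted by `𝐢`, together with the point counted by `𝐛₁` when `a = P_ν(j)` is
an integer below `b = P_{ν'}(j)`. The left-hand side differs from `∑ⱼ (⌈P_{ν'}(j)⌉ - ⌈P_ν(j)⌉)` by
`∑ⱼ δ(P_{ν'}(j)) - ∑ⱼ δ(P_ν(j))`, where `δ x = 2x - ⌊x⌋ - ⌈x⌉`. Since `δ` is odd, `ℤ`-periodic and
vanishes on `ℤ`, its values along a segment of a Newton polygon joining two lattice points cancel
under the reflection of the segment, so `∑ⱼ δ(P_ν(j)) = 0` for every Newton vector `ν`.
-/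

open Finset

def floorCeilDefect (x : ℚ) : ℚ := 2 * x - ⌊x⌋ - ⌈x⌉

instance : DecidablePred IsIntQ := fun q =>
  decidable_of_iff (q.den = 1) <| (Rat.den_eq_one_iff q).trans
    ⟨fun h => ⟨q.num, h⟩, fun ⟨m, hm⟩ => hm ▸ by rw [Rat.num_intCast]⟩

namespace floorCeilDefect

lemma intCast (m : ℤ) : floorCeilDefect m = 0 := by
  simp only [floorCeilDefect, Int.floor_intCast, Int.ceil_intCast]; ring

lemma intCast_add (m : ℤ) (x : ℚ) : floorCeilDefect (m + x) = floorCeilDefect x := by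
  simp only [floorCeilDefect, Int.floor_intCast_add, Int.ceil_intCast_add]; push_cast; ring

lemma neg (x : ℚ) : floorCeilDefect (-x) = -floorCeilDefect x := by
  simp only [floorCeilDefect, Int.floor_neg, Int.ceil_neg]; push_cast; ring

end floorCeilDefect

lemma sum_range_floorCeilDefect_mul {q : ℚ} {L : ℕ} (hq : IsIntQ (L * q)) :
    ∑ t ∈ range L, floorCeilDefect (t * q) = 0 := by
  obtain ⟨d, hd⟩ := hq
  have hreflect : ∑ t ∈ range (L + 1), floorCeilDefect (t * q) =
      -∑ t ∈ range (L + 1), floorCeilDefect (t * q) := by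
    conv_lhs => rw [← sum_range_reflect]
    rw [← sum_neg_distrib]
    refine sum_congr rfl fun t ht => ?_
    have htL : t ≤ L := Nat.lt_succ_iff.mp (mem_range.mp ht)
    have hcast : ((L + 1 - 1 - t : ℕ) : ℚ) * q = d + -(t * q) := by
      rw [Nat.add_sub_cancel, Nat.cast_sub htL, hd]; ring
    rw [hcast, floorCeilDefect.intCast_add, floorCeilDefect.neg]
  have hfull : ∑ t ∈ range (L + 1), floorCeilDefect (t * q) = 0 := by linarith
  rwa [sum_range_succ, ← hd, floorCeilDefect.intCast, add_zero] at hfull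

lemma newtonP_add_of_forall_eq {ν : ℕ → ℚ} {a t : ℕ} {c : ℚ}
    (h : ∀ k < t, ν (a + k) = c) : newtonP ν (a + t) = newtonP ν a + t * c := by
  rw [newtonP, sum_range_add, newtonP, sum_congr rfl fun k hk => h k (mem_range.mp hk),
    sum_const, card_range, nsmul_eq_mul]

lemma sum_range_floorCeilDefect_newtonP {n : ℕ} {ν : ℕ → ℚ} (hend : IsIntQ (newtonP ν n))
    (hbreak : ∀ j, 1 ≤ j → j ≤ n - 1 → ν (j - 1) ≠ ν j → IsIntQ (newtonP ν j)) :
    ∑ j ∈ range n, floorCeilDefect (newtonP ν j) = 0 := by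
  induction n using Nat.strong_induction_on with
  | _ n ih =>
  rcases Nat.eq_zero_or_pos n with rfl | hn
  · simp
  -- `a` is the last lattice vertex before `n`; the polygon is a single segment on `[a, n]`.
  obtain ⟨a, ha, han, hlast⟩ : ∃ a, IsIntQ (newtonP ν a) ∧ a < n ∧
      ∀ j, a < j → j ≤ n - 1 → ¬IsIntQ (newtonP ν j) :=
    ⟨_, Nat.findGreatest_spec (P := fun j => IsIntQ (newtonP ν j)) (Nat.zero_le _)
        ⟨0, by simp [newtonP]⟩,
      by have := Nat.findGreatest_le (P := fun j => IsIntQ (newtonP ν j)) (n - 1); omega,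
      fun _ => Nat.findGreatest_is_greatest⟩
  have hconst : ∀ k < n - a, ν (a + k) = ν a := by
    intro k hk
    induction k with
    | zero => rfl
    | succ k ihk =>
      rw [← ihk (by omega)]
      by_contra hne
      exact hlast (a + (k + 1)) (by omega) (by omega)
        (hbreak (a + (k + 1)) (by omega) (by omega) (Ne.symm hne))
  have hseg : ∀ t ≤ n - a, newtonP ν (a + t) = newtonP ν a + t * ν a := fun t ht =>
    newtonP_add_of_forall_eq fun k hk => hconst k (by omega)
  have hslope : IsIntQ ((n - a : ℕ) * ν a) := by
    obtain ⟨pa, hpa⟩ := ha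
    obtain ⟨pn, hpn⟩ := hend
    have hPn := hseg (n - a) le_rfl
    rw [Nat.add_sub_cancel' han.le] at hPn
    exact ⟨pn - pa, by rw [Int.cast_sub, hpa, hpn, hPn]; ring⟩
  have hhead : ∑ j ∈ range a, floorCeilDefect (newtonP ν j) = 0 :=
    ih a han ha fun j hj1 hj2 hne => hbreak j hj1 (by omega) hne
  have htail : ∑ t ∈ range (n - a), floorCeilDefect (newtonP ν (a + t)) = 0 := by
    obtain ⟨pa, hpa⟩ := ha
    rw [sum_congr rfl fun t ht => by rw [hseg t (mem_range.mp ht).le, ← hpa,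
      floorCeilDefect.intCast_add]]
    exact sum_range_floorCeilDefect_mul hslope
  rw [← Nat.add_sub_cancel' han.le, sum_range_add, hhead, htail, add_zero]

lemma sum_Icc_floorCeilDefect_newtonP {n : ℕ} {ν : ℕ → ℚ} (hν : IsNewton n ν) :
    ∑ j ∈ Icc 1 (n - 1), floorCeilDefect (newtonP ν j) = 0 := by
  rcases n with _ | m
  · simp
  have hsum := sum_range_floorCeilDefect_newtonP hν.2.1 hν.2.2
  rw [range_eq_Ico, sum_eq_sum_Ico_succ_bot m.succ_pos, newtonP, sum_range_zero,
    ← Int.cast_zero, floorCeilDefect.intCast, zero_add] at hsum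
  rwa [Nat.add_sub_cancel, ← Ico_add_one_right_eq_Icc]

lemma card_Ioo_floor_ceil_add_ite {a b : ℚ} (hab : a ≤ b) :
    (#(Ioo ⌊a⌋ ⌈b⌉) : ℤ) + (if IsIntQ a ∧ a < b then 1 else 0) = ⌈b⌉ - ⌈a⌉ := by
  rw [Int.card_Ioo]
  by_cases ha : IsIntQ a
  · obtain ⟨m, rfl⟩ := ha
    rcases hab.lt_or_eq with hlt | rfl
    · have := Int.lt_ceil.mpr hlt
      rw [if_pos ⟨⟨m, rfl⟩, hlt⟩, Int.floor_intCast, Int.ceil_intCast]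
      omega
    · simp
  · have hceil := (Int.ceil_eq_floor_add_one_iff_notMem a).mpr ha
    have := Int.ceil_mono hab
    rw [if_neg fun h => ha h.1]
    omega

lemma nI_eq_sum_card_Ioo (n : ℕ) (ν ν' : ℕ → ℚ) :
    nI n ν ν' = ∑ j ∈ Icc 1 (n - 1), #(Ioo ⌊newtonP ν j⌋ ⌈newtonP ν' j⌉) := by
  have hset : {p : ℕ × ℤ | 1 ≤ p.1 ∧ p.1 ≤ n - 1 ∧
      newtonP ν p.1 < (p.2 : ℚ) ∧ (p.2 : ℚ) < newtonP ν' p.1} =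
      ↑((Icc 1 (n - 1)).biUnion fun j =>
        (Ioo ⌊newtonP ν j⌋ ⌈newtonP ν' j⌉).map (Function.Embedding.sectR j ℤ)) := by
    ext ⟨j, m⟩
    simp only [Set.mem_ofPred_eq, coe_biUnion, coe_map, coe_Ioo, mem_coe, mem_Icc,
      Set.mem_iUnion, Set.mem_image, Set.mem_Ioo, Function.Embedding.sectR_apply, Prod.mk.injEq,
      Int.floor_lt, Int.lt_ceil]
    constructor
    · rintro ⟨h1, h2, h3, h4⟩
      exact ⟨j, ⟨h1, h2⟩, m, ⟨h3, h4⟩, rfl, rfl⟩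
    · rintro ⟨i, hi, m', hm', rfl, rfl⟩
      exact ⟨hi.1, hi.2, hm'⟩
  rw [nI, hset, Set.ncard_coe_finset, card_biUnion]
  · simp only [card_map]
  · intro x _ y _ hxy
    simp only [Function.onFun, disjoint_left, mem_map, Function.Embedding.sectR_apply]
    rintro _ ⟨m, -, rfl⟩ ⟨m', -, h⟩
    exact hxy (congrArg Prod.fst h).symm

lemma nB1_eq_sum_ite (n : ℕ) (ν ν' : ℕ → ℚ) :
    nB1 n ν ν' = ∑ j ∈ Icc 1 (n - 1),
      if IsIntQ (newtonP ν j) ∧ newtonP ν j < newtonP ν' j then 1 else 0 := by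
  rw [nB1, ← card_filter, ← Set.ncard_coe_finset, coe_filter]
  simp only [mem_Icc, and_assoc]

lemma nI_add_nB1 {n : ℕ} {ν ν' : ℕ → ℚ}
    (hle : ∀ j, 1 ≤ j → j ≤ n - 1 → newtonP ν j ≤ newtonP ν' j) :
    (nI n ν ν' + nB1 n ν ν' : ℤ) = ∑ j ∈ Icc 1 (n - 1), (⌈newtonP ν' j⌉ - ⌈newtonP ν j⌉) := by
  rw [nI_eq_sum_card_Ioo, nB1_eq_sum_ite]
  push_cast
  rw [← sum_add_distrib]
  refine sum_congr rfl fun j hj => ?_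
  obtain ⟨h1, h2⟩ := mem_Icc.mp hj
  exact card_Ioo_floor_ceil_add_ite (hle j h1 h2)

lemma two_mul_nA_sub_sum_floor (n : ℕ) (ν ν' : ℕ → ℚ) :
    2 * nA n ν ν' - ((∑ j ∈ Icc 1 (n - 1), (⌊newtonP ν' j⌋ - ⌊newtonP ν j⌋) : ℤ) : ℚ) =
      ((∑ j ∈ Icc 1 (n - 1), (⌈newtonP ν' j⌉ - ⌈newtonP ν j⌉) : ℤ) : ℚ) +
        ∑ j ∈ Icc 1 (n - 1), floorCeilDefect (newtonP ν' j) -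
        ∑ j ∈ Icc 1 (n - 1), floorCeilDefect (newtonP ν j) := by
  simp only [nA, floorCeilDefect, mul_sum, Int.cast_sum, Int.cast_sub, ← sum_sub_distrib,
    ← sum_add_distrib]
  exact sum_congr rfl fun j _ => by ring

theorem essGap_eq_i_add_b1_general (n : ℕ) (ν ν' : ℕ → ℚ)
    (hν : IsNewton n ν) (hν' : IsNewton n ν') (hle : NewtonLE n ν ν') :
    2 * nA n ν ν' -
      ((∑ j ∈ Finset.Icc 1 (n - 1), (⌊newtonP ν' j⌋ - ⌊newtonP ν j⌋) : ℤ) : ℚ) =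
      (nI n ν ν' : ℚ) + (nB1 n ν ν' : ℚ) := by
  rw [two_mul_nA_sub_sum_floor, sum_Icc_floorCeilDefect_newtonP hν,
    sum_Icc_floorCeilDefect_newtonP hν', ← nI_add_nB1 hle.2]
  push_cast
  ring

/-- for Newton vectors `ν ≤ ν'` in ℚⁿ,
`2·𝐀(ν,ν') − Σ_{j=1}^{n−1} (⌊P_{ν'}(j)⌋ − ⌊P_ν(j)⌋) = 𝐢(ν,ν') + 𝐛₁(ν,ν')`
(for `GL_n` the left-hand side is the essential gap `Ess-gap([b],[b'])`). -/
theorem essGap_eq_i_add_b1 (n : ℕ) (hn : 1 ≤ n) (ν ν' : ℕ → ℚ)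
    (hν : IsNewton n ν) (hν' : IsNewton n ν') (hle : NewtonLE n ν ν') :
    2 * nA n ν ν' -
      ((∑ j ∈ Finset.Icc 1 (n - 1), (⌊newtonP ν' j⌋ - ⌊newtonP ν j⌋) : ℤ) : ℚ) =
      (nI n ν ν' : ℚ) + (nB1 n ν ν' : ℚ) :=
  essGap_eq_i_add_b1_general n ν ν' hν hν' hle
end

section
/- Let ν ≤ ν' be Newton vectors in ℚⁿ. Then 2·𝐀(ν,ν') − Σ_{j=1}^{n−1} (⌊P_{ν'}(j)⌋ − ⌊P_ν(j)⌋) is a nonnegative integer. (This is Lemma 2.1 of the paper — the essential gap Ess-gap([b],[b']) lies in ℤ_{≥0} — specialized to σ-conjugacy classes of GL_n.) -/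
def psiQ (q : ℚ) : ℚ := 2 * q - (⌊q⌋ : ℚ) - (⌈q⌉ : ℚ)

lemma psiQ_neg (q : ℚ) : psiQ (-q) = - psiQ q := by
  simp [psiQ, Int.floor_neg, Int.ceil_neg]; ring

lemma psiQ_add_int (q : ℚ) (m : ℤ) : psiQ (q + (m : ℚ)) = psiQ q := by
  simp [psiQ, Int.floor_add_intCast, Int.ceil_add_intCast]; push_cast; ring

lemma psiQ_intCast (m : ℤ) : psiQ ((m : ℚ)) = 0 := by
  simp [psiQ]; ring

lemma newtonP_shift (ν : ℕ → ℚ) (a j : ℕ) :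
    newtonP (fun k => ν (a + k)) j = newtonP ν (a + j) - newtonP ν a := by
  unfold newtonP
  rw [Finset.sum_range_add]
  ring

lemma psi_sum_zero : ∀ n, ∀ ν : ℕ → ℚ, IsNewton n ν →
    ∑ j ∈ Finset.Icc 1 (n-1), psiQ (newtonP ν j) = 0 := by
  intro n
  induction n using Nat.strong_induction_on with
  | _ n IH =>
    intro ν hν
    obtain ⟨hdec, ⟨M, hM⟩, hbp⟩ := hν
    by_cases hbrk : ∃ j, 1 ≤ j ∧ j ≤ n - 1 ∧ ν (j-1) ≠ ν j
    · obtain ⟨j0, hj01, hj0n, hj0ne⟩ := hbrk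
      have hn2 : 2 ≤ n := by omega
      obtain ⟨m0, hm0⟩ := hbp j0 hj01 hj0n hj0ne
      -- left piece
      have hleft : IsNewton j0 ν := by
        refine ⟨fun k hk => hdec k (by omega), ⟨m0, hm0⟩, fun j hj1 hj2 hne => ?_⟩
        exact hbp j hj1 (by omega) hne
      have hL := IH j0 (by omega) ν hleft
      -- right piece
      set ν2 : ℕ → ℚ := fun k => ν (j0 + k) with hν2
      have hP2 : ∀ j, newtonP ν2 j = newtonP ν (j0 + j) - newtonP ν j0 :=
        fun j => newtonP_shift ν j0 j
      have hright : IsNewton (n - j0) ν2 := by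
        refine ⟨fun k hk => ?_, ?_, fun j hj1 hj2 hne => ?_⟩
        · have : j0 + k + 1 < n := by omega
          have := hdec (j0 + k) this
          simpa [hν2, Nat.add_assoc] using this
        · refine ⟨M - m0, ?_⟩
          rw [hP2, show j0 + (n - j0) = n by omega]
          push_cast
          rw [hM, hm0]
        · have hne' : ν ((j0 + j) - 1) ≠ ν (j0 + j) := by
            have h1 : (j0 + j) - 1 = j0 + (j - 1) := by omega
            rw [h1]
            simpa [hν2] using hne
          obtain ⟨m1, hm1⟩ := hbp (j0 + j) (by omega) (by omega) hne'
          refine ⟨m1 - m0, ?_⟩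
          rw [hP2]
          push_cast
          rw [hm1, hm0]
      have hR := IH (n - j0) (by omega) ν2 hright
      -- reindex right sum
      have hreidx : ∑ j ∈ Finset.Ioc j0 (n-1), psiQ (newtonP ν j)
          = ∑ k ∈ Finset.Icc 1 (n - j0 - 1), psiQ (newtonP ν2 k) := by
        have e1 : Finset.Ioc j0 (n-1) = Finset.Ico (j0+1) n := by
          ext x; simp [Finset.mem_Ioc, Finset.mem_Ico]; omega
        have e2 : Finset.Icc 1 (n - j0 - 1) = Finset.Ico 1 (n - j0) := by
          ext x; simp [Finset.mem_Icc, Finset.mem_Ico]; omega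
        rw [e1, e2, Finset.sum_Ico_eq_sum_range, Finset.sum_Ico_eq_sum_range]
        apply Finset.sum_congr
        · congr 1
        · intro i _
          rw [hP2, show j0 + (1 + i) = j0 + 1 + i by ring]
          rw [hm0.symm]
          have : newtonP ν (j0 + 1 + i) - (m0 : ℚ) + (m0 : ℚ) = newtonP ν (j0 + 1 + i) := by ring
          rw [← psiQ_add_int (newtonP ν (j0 + 1 + i) - (m0:ℚ)) m0, this]
      -- split the whole sum
      have hsplit : ∑ j ∈ Finset.Icc 1 (n-1), psiQ (newtonP ν j)
          = (∑ j ∈ Finset.Icc 1 (j0-1), psiQ (newtonP ν j)) + psiQ (newtonP ν j0)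
            + ∑ j ∈ Finset.Ioc j0 (n-1), psiQ (newtonP ν j) := by
        have h1 : Finset.Icc 1 (n-1) = Finset.Ioc 0 (n-1) := by
          ext x; simp [Finset.mem_Icc, Finset.mem_Ioc]; omega
        have h2 : Finset.Icc 1 j0 = Finset.Ioc 0 j0 := by
          ext x; simp [Finset.mem_Icc, Finset.mem_Ioc]; omega
        rw [h1, ← Finset.sum_Ioc_consecutive _ (by omega : (0:ℕ) ≤ j0) (by omega : j0 ≤ n-1)]
        congr 1
        rw [← h2, show Finset.Icc 1 j0 = insert j0 (Finset.Icc 1 (j0-1)) by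
          ext x; simp [Finset.mem_Icc, Finset.mem_insert]; omega]
        rw [Finset.sum_insert (by simp [Finset.mem_Icc]; omega)]
        ring
      rw [hsplit, hL, hreidx, hR, ← hm0, psiQ_intCast]
      ring
    · -- constant case
      push_neg at hbrk
      rcases Nat.lt_or_ge n 2 with hn1 | hn2
      · interval_cases n <;> simp
      · have hval : ∀ k, k ≤ n - 1 → ν k = ν 0 := by
          intro k hk
          induction k with
          | zero => rfl
          | succ k ih =>
            have h1 := hbrk (k+1) (by omega) (by omega)
            simp only [Nat.add_sub_cancel] at h1
            rw [← h1, ih (by omega)]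
        have hP : ∀ j, j ≤ n → newtonP ν j = (j : ℚ) * ν 0 := by
          intro j hj
          unfold newtonP
          rw [Finset.sum_congr rfl (fun k hk => hval k (by
            simp [Finset.mem_range] at hk; omega))]
          simp [mul_comm]
        have hMn : (M : ℚ) = (n : ℚ) * ν 0 := by rw [hM, hP n le_rfl]
        have hanti : ∀ j ∈ Finset.Icc 1 (n-1),
            psiQ (newtonP ν j) = - psiQ (newtonP ν (n - j)) := by
          intro j hj
          simp only [Finset.mem_Icc] at hj
          rw [hP j (by omega), hP (n - j) (by omega)]
          have hc : ((n - j : ℕ) : ℚ) = (n : ℚ) - (j : ℚ) := by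
            push_cast [Nat.cast_sub (by omega : j ≤ n)]; ring
          rw [hc]
          have : ((n:ℚ) - j) * ν 0 = -((j:ℚ) * ν 0) + (M : ℚ) := by
            rw [hMn]; ring
          rw [this, psiQ_add_int, psiQ_neg]
          ring
        have hswap : ∑ j ∈ Finset.Icc 1 (n-1), psiQ (newtonP ν (n - j))
            = ∑ j ∈ Finset.Icc 1 (n-1), psiQ (newtonP ν j) := by
          apply Finset.sum_nbij' (fun j => n - j) (fun j => n - j)
          · intro a ha; simp [Finset.mem_Icc] at ha ⊢; omega
          · intro a ha; simp [Finset.mem_Icc] at ha ⊢; omega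
          · intro a ha; simp [Finset.mem_Icc] at ha; omega
          · intro a ha; simp [Finset.mem_Icc] at ha; omega
          · intro a ha; rfl
        have := Finset.sum_congr rfl hanti
        rw [Finset.sum_neg_distrib] at this
        rw [hswap] at this
        linarith

/-- Lemma 2.1 for `GL_n`: for Newton vectors `ν ≤ ν'` in ℚⁿ, the essential gap
`2·𝐀(ν,ν') − Σ_{j=1}^{n−1} (⌊P_{ν'}(j)⌋ − ⌊P_ν(j)⌋)` is a nonnegative integer. -/
theorem essGap_nonneg_integer (n : ℕ) (hn : 1 ≤ n) (ν ν' : ℕ → ℚ)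
    (hν : IsNewton n ν) (hν' : IsNewton n ν') (hle : NewtonLE n ν ν') :
    ∃ m : ℕ, (m : ℚ) =
      2 * nA n ν ν' -
        ((∑ j ∈ Finset.Icc 1 (n - 1), (⌊newtonP ν' j⌋ - ⌊newtonP ν j⌋) : ℤ) : ℚ) := by
  have Hf := psi_sum_zero n ν hν
  have Hg := psi_sum_zero n ν' hν'
  set S := Finset.Icc 1 (n-1) with hS
  set c : ℤ := ∑ j ∈ S, (⌈newtonP ν' j⌉ - ⌈newtonP ν j⌉) with hc
  have hnn : 0 ≤ c := by
    apply Finset.sum_nonneg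
    intro j hj
    rw [hS, Finset.mem_Icc] at hj
    have h := hle.2 j hj.1 hj.2
    have := Int.ceil_le_ceil h
    omega
  refine ⟨c.toNat, ?_⟩
  have hcast : ((c.toNat : ℕ) : ℚ) = (c : ℚ) := by
    rw [← Int.cast_natCast, Int.toNat_of_nonneg hnn]
  rw [hcast]
  -- expand everything into rational sums
  unfold psiQ at Hf Hg
  rw [Finset.sum_sub_distrib, Finset.sum_sub_distrib] at Hf Hg
  rw [← Finset.mul_sum] at Hf Hg
  unfold nA
  rw [hc]
  push_cast [Finset.sum_sub_distrib]
  linarith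
end

section
/- Let n ≥ 2 and 1 ≤ i ≤ n−1 be integers, d = gcd(i,n), r = n/d. Let a₁ ≥ a₂ ≥ ⋯ ≥ a_d be integers and let μ ∈ ℤⁿ be the vector in which each a_k is repeated r consecutive times. Then there is no i-twisted Newton vector ν with ν ≠ μ, P̃_ν(n) = P̃_μ(n), P̃_ν(j) ≤ P̃_μ(j) for all 1 ≤ j ≤ n−1, and 𝐢(ν,μ) + 𝐛₁(ν,μ) = 0. (This is Proposition 4.9 of the paper: for the Tits datum (A_{n−1}, Ad(τ_i), {μ}) with i ≠ 0 and [b_{μ,max}] μ-ordinary — which forces μ to have the stated r-block form — there is no σ-conjugacy class [b] < [b_{μ,max}] with Ess-gap([b],[b_{μ,max}]) = 0.) -/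
/-- Shifted partial sum `P̃_ν(j) = ν₁ + ⋯ + ν_j + j·i/n` (0-indexed entries). -/
def newtonPT (n i : ℕ) (ν : ℕ → ℚ) (j : ℕ) : ℚ :=
  (∑ k ∈ Finset.range j, ν k) + (j : ℚ) * (i : ℚ) / (n : ℚ)

/-- `ν` is an `i`-twisted Newton vector (of length `n`): weakly decreasing, integral shifted
total sum, and integral shifted partial sum at every breakpoint. -/
def IsTwNewton (n i : ℕ) (ν : ℕ → ℚ) : Prop :=
  (∀ k, k + 1 < n → ν (k + 1) ≤ ν k) ∧
  IsIntQ (newtonPT n i ν n) ∧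
  ∀ j, 1 ≤ j → j ≤ n - 1 → ν (j - 1) ≠ ν j → IsIntQ (newtonPT n i ν j)

/-- `𝐢(ν,ν')`: the number of lattice points strictly between the two shifted Newton polygons. -/
noncomputable def nIT (n i : ℕ) (ν ν' : ℕ → ℚ) : ℕ :=
  Set.ncard {p : ℕ × ℤ | 1 ≤ p.1 ∧ p.1 ≤ n - 1 ∧
    newtonPT n i ν p.1 < (p.2 : ℚ) ∧ (p.2 : ℚ) < newtonPT n i ν' p.1}

/-- `𝐛₁(ν,ν')`: lattice points on the lower shifted polygon not lying on the upper one. -/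
noncomputable def nB1T (n i : ℕ) (ν ν' : ℕ → ℚ) : ℕ :=
  Set.ncard {j : ℕ | 1 ≤ j ∧ j ≤ n - 1 ∧ IsIntQ (newtonPT n i ν j) ∧
    newtonPT n i ν j < newtonPT n i ν' j}

/-- `𝐛₂(ν,ν')`: lattice points on the upper shifted polygon not lying on the lower one. -/
noncomputable def nB2T (n i : ℕ) (ν ν' : ℕ → ℚ) : ℕ :=
  Set.ncard {j : ℕ | 1 ≤ j ∧ j ≤ n - 1 ∧ IsIntQ (newtonPT n i ν' j) ∧
    newtonPT n i ν j < newtonPT n i ν' j}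

/-!
The shifted polygon `P̃_μ` is integral exactly at the multiples of `r`, because
`P̃_μ(j) ≡ j·(i/d)/r mod ℤ` and `gcd(r, i/d) = 1`. Ess-gap zero says that no integer lies in
`[P̃_ν(j), P̃_μ(j))`, so every lattice point of `P̃_ν` lies on `P̃_μ`. Hence `ν` only breaks at
multiples of `r`, i.e. it is constant, say `c_t`, on the blocks of `μ`, and the block gaps
`D_t = P̃_μ(rt) - P̃_ν(rt)` lie in `[0, 1)` with `D_{t+1} - D_t = r(a_t - c_t)`.
Where `D_t ≠ 0` the vector `ν` cannot break at `rt`, so `c_{t-1} = c_t`; as `r ≥ 2` and the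
increments of `D` lie in `(-1, 1)`, this forces `a_{t-1} = a_t`, so `D` is affine around `t`.
A sequence vanishing at `0` and `d` that is affine around each of its nonzero values vanishes,
so `D = 0`, `c_t = a_t` and `ν = μ`.
-/

open Finset

lemma isIntQ_intCast_add_iff (m : ℤ) (q : ℚ) : IsIntQ (m + q) ↔ IsIntQ q := by
  constructor
  · rintro ⟨k, hk⟩
    exact ⟨k - m, by push_cast; linarith⟩
  · rintro ⟨k, rfl⟩
    exact ⟨m + k, by push_cast; rfl⟩

lemma isIntQ_natCast_div_iff {a b : ℕ} (hb : b ≠ 0) : IsIntQ ((a : ℚ) / b) ↔ b ∣ a := by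
  constructor
  · rintro ⟨m, hm⟩
    rw [eq_div_iff (by positivity)] at hm
    exact Int.natCast_dvd_natCast.mp ⟨m, by rw [mul_comm]; exact_mod_cast hm.symm⟩
  · rintro ⟨k, rfl⟩
    exact ⟨k, by push_cast; field_simp⟩

lemma Nat.dvd_mul_iff_div_gcd_dvd {n i j : ℕ} (hi : 0 < i) : n ∣ j * i ↔ n / i.gcd n ∣ j := by
  have hg : 0 < i.gcd n := Nat.gcd_pos_of_pos_left n hi
  have hn : n / i.gcd n * i.gcd n = n := Nat.div_mul_cancel (Nat.gcd_dvd_right i n)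
  have hi' : i / i.gcd n * i.gcd n = i := Nat.div_mul_cancel (Nat.gcd_dvd_left i n)
  calc n ∣ j * i ↔ n / i.gcd n * i.gcd n ∣ j * (i / i.gcd n) * i.gcd n := by
        rw [hn, mul_assoc, hi']
    _ ↔ n / i.gcd n ∣ j * (i / i.gcd n) := Nat.mul_dvd_mul_iff_right hg
    _ ↔ n / i.gcd n ∣ j := (Nat.coprime_div_gcd_div_gcd hg).symm.dvd_mul_right

lemma Nat.two_le_div_gcd {i n : ℕ} (hi : 0 < i) (hin : i < n) : 2 ≤ n / i.gcd n := by
  have hg : i.gcd n ≤ i := Nat.gcd_le_left n hi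
  have hn : n / i.gcd n * i.gcd n = n := Nat.div_mul_cancel (Nat.gcd_dvd_right i n)
  by_contra! h
  have : n / i.gcd n * i.gcd n ≤ 1 * i.gcd n := Nat.mul_le_mul_right _ (by omega)
  omega

lemma Nat.mul_sub_one_div {r t : ℕ} (hr : 0 < r) : (r * t - 1) / r = t - 1 := by
  rcases Nat.eq_zero_or_pos t with rfl | ht
  · simp
  have hrt : r * t = r * (t - 1) + r := by rw [← Nat.mul_add_one, Nat.sub_add_cancel ht]
  refine Nat.div_eq_of_lt_le ?_ ?_ <;> rw [mul_comm _ r]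
  · omega
  · rw [Nat.sub_add_cancel ht]
    omega

lemma apply_eq_apply_mul_div {α : Type*} {f : ℕ → α} {r N : ℕ}
    (h : ∀ j, 0 < j → j < N → ¬ r ∣ j → f (j - 1) = f j) : ∀ k < N, f k = f (r * (k / r)) := by
  intro k
  induction k with
  | zero => simp
  | succ k ih =>
    intro hk
    by_cases hr : r ∣ k + 1
    · rw [Nat.mul_div_cancel' hr]
    · rw [← h (k + 1) k.succ_pos hk hr, Nat.succ_div_of_not_dvd hr, Nat.add_sub_cancel]
      exact ih (by omega)

lemma eq_zero_of_sub_eq_sub_of_ne_zero {K : Type*} [Field K] [CharZero K] {D : ℕ → K} {d : ℕ}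
    (h0 : D 0 = 0) (hd : D d = 0)
    (h : ∀ t, 0 < t → t < d → D t ≠ 0 → D (t + 1) - D t = D t - D (t - 1)) :
    ∀ t ≤ d, D t = 0 := by
  classical
  by_contra! hex
  obtain ⟨ht₀d, ht₀⟩ := Nat.find_spec hex
  set t₀ := Nat.find hex
  have ht₀pos : 0 < t₀ := Nat.pos_of_ne_zero fun h ↦ ht₀ (h ▸ h0)
  have hprev : D (t₀ - 1) = 0 := by
    by_contra hne
    exact Nat.find_min hex (by omega) ⟨by omega, hne⟩
  have hlin : ∀ k, t₀ + k ≤ d → D (t₀ + k) = (k + 1) * D t₀ ∧ D (t₀ + k - 1) = k * D t₀ := by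
    intro k
    induction k with
    | zero => intro; simpa using hprev
    | succ k ih =>
      intro hk
      obtain ⟨hcur, hpre⟩ := ih (by omega)
      have hne : D (t₀ + k) ≠ 0 := by
        rw [hcur]
        exact mul_ne_zero (Nat.cast_add_one_ne_zero k) ht₀
      have hstep := h (t₀ + k) (by omega) (by omega) hne
      rw [← add_assoc, Nat.add_sub_cancel]
      push_cast
      exact ⟨by linear_combination hstep + 2 * hcur - hpre, hcur⟩
  have hlast := (hlin (d - t₀) (by omega)).1
  rw [Nat.add_sub_cancel' ht₀d, hd] at hlast
  exact mul_ne_zero (Nat.cast_add_one_ne_zero _) ht₀ hlast.symm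

lemma eq_of_blockGap_mem_Ico {r d : ℕ} (hr : 2 ≤ r) {D c : ℕ → ℚ} {a : ℕ → ℤ}
    (h0 : D 0 = 0) (hd : D d = 0) (hD : ∀ t ≤ d, D t ∈ Set.Ico 0 1)
    (hstep : ∀ t < d, D (t + 1) = D t + r * (a t - c t))
    (hc : ∀ t, 0 < t → t < d → D t ≠ 0 → c (t - 1) = c t) :
    ∀ t < d, c t = a t := by
  have hvanish := eq_zero_of_sub_eq_sub_of_ne_zero h0 hd fun t ht0 htd hDt ↦ by
    have hprev := hstep (t - 1) (by omega)
    rw [Nat.sub_add_cancel ht0, hc t ht0 htd hDt] at hprev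
    -- both increments of `D` around `t` lie in `(-1, 1)`, and they differ by `r (a_t - a_{t-1})`
    have hjump : |(r : ℚ) * ((a t - a (t - 1) : ℤ) : ℚ)| < 2 := by
      obtain ⟨h₁, h₁'⟩ := hD (t - 1) (by omega)
      obtain ⟨h₂, h₂'⟩ := hD t (by omega)
      obtain ⟨h₃, h₃'⟩ := hD (t + 1) (by omega)
      rw [abs_lt]
      push_cast
      constructor <;> linarith [hstep t htd]
    have ha : a t = a (t - 1) := by
      by_contra hne
      have : (1 : ℚ) ≤ |((a t - a (t - 1) : ℤ) : ℚ)| := by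
        exact_mod_cast Int.one_le_abs (sub_ne_zero.mpr hne)
      rw [abs_mul, abs_of_nonneg (by positivity)] at hjump
      have : (2 : ℚ) ≤ r := by exact_mod_cast hr
      nlinarith
    rw [hstep t htd, hprev, ha]
    ring
  intro t ht
  have := hstep t ht
  rw [hvanish t ht.le, hvanish (t + 1) ht, zero_add, eq_comm, mul_eq_zero] at this
  rcases this with hr0 | hac
  · exact absurd hr0 (by positivity)
  · linarith

lemma newtonPT_add_of_forall_eq {n i j k : ℕ} {f : ℕ → ℚ} {c : ℚ}
    (h : ∀ x < k, f (j + x) = c) :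
    newtonPT n i f (j + k) = newtonPT n i f j + k * c + k * i / n := by
  simp only [newtonPT, sum_range_add, sum_congr rfl fun x hx ↦ h x (mem_range.1 hx), sum_const,
    card_range, nsmul_eq_mul]
  push_cast
  ring

lemma apply_mul_add_eq {α : Type*} {f g : ℕ → α} {r d t x : ℕ}
    (h : ∀ k < r * d, f k = g (k / r)) (ht : t < d) (hx : x < r) : f (r * t + x) = g t := by
  rw [h _ (by nlinarith), Nat.mul_add_div (by omega), Nat.div_eq_of_lt hx, add_zero]

lemma apply_mul_sub_one_eq {α : Type*} {f g : ℕ → α} {r d t : ℕ}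
    (h : ∀ k < r * d, f k = g (k / r)) (hr : 0 < r) (ht0 : 0 < t) (htd : t ≤ d) :
    f (r * t - 1) = g (t - 1) := by
  have : 0 < r * t := Nat.mul_pos hr ht0
  have : r * t ≤ r * d := Nat.mul_le_mul_left r htd
  rw [h _ (by omega), Nat.mul_sub_one_div hr]

lemma newtonPT_sub_newtonPT_mul_succ {n i r d t : ℕ} {f f' g g' : ℕ → ℚ}
    (hf : ∀ k < r * d, f k = g (k / r)) (hf' : ∀ k < r * d, f' k = g' (k / r)) (ht : t < d) :
    newtonPT n i f (r * (t + 1)) - newtonPT n i f' (r * (t + 1)) =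
      newtonPT n i f (r * t) - newtonPT n i f' (r * t) + r * (g t - g' t) := by
  rw [mul_add_one, newtonPT_add_of_forall_eq fun x hx ↦ apply_mul_add_eq hf ht hx,
    newtonPT_add_of_forall_eq fun x hx ↦ apply_mul_add_eq hf' ht hx]
  ring

lemma isIntQ_newtonPT_iff {n i j : ℕ} (hn : n ≠ 0) {μ : ℕ → ℚ} (hμ : ∀ k < j, IsIntQ (μ k)) :
    IsIntQ (newtonPT n i μ j) ↔ n ∣ j * i := by
  choose! b hb using hμ
  have hsum : ∑ k ∈ range j, μ k = ((∑ k ∈ range j, b k : ℤ) : ℚ) := by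
    push_cast
    exact sum_congr rfl fun k hk ↦ (hb k (mem_range.1 hk)).symm
  rw [newtonPT, hsum, isIntQ_intCast_add_iff, ← isIntQ_natCast_div_iff hn, Nat.cast_mul]

section EssGap

variable {n i j : ℕ} {ν ν' : ℕ → ℚ}

lemma nIT_pos (hj1 : 1 ≤ j) (hj2 : j ≤ n - 1) {m : ℤ} (h₁ : newtonPT n i ν j < m)
    (h₂ : m < newtonPT n i ν' j) : 0 < nIT n i ν ν' := by
  refine (Set.ncard_pos ?_).2 ⟨(j, m), hj1, hj2, h₁, h₂⟩
  refine ((Set.finite_Icc 1 (n - 1)).biUnion fun k _ ↦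
    (Set.finite_singleton k).prod (Set.finite_Icc ⌈newtonPT n i ν k⌉ ⌊newtonPT n i ν' k⌋)).subset ?_
  rintro ⟨k, l⟩ ⟨hk1, hk2, hl1, hl2⟩
  exact Set.mem_biUnion (by simp [hk1, hk2])
    ⟨rfl, Int.ceil_le.2 hl1.le, Int.le_floor.2 hl2.le⟩

lemma nB1T_pos (hj1 : 1 ≤ j) (hj2 : j ≤ n - 1) (hint : IsIntQ (newtonPT n i ν j))
    (hlt : newtonPT n i ν j < newtonPT n i ν' j) : 0 < nB1T n i ν ν' :=
  (Set.ncard_pos ((Set.finite_Icc 1 (n - 1)).subset fun _ hk ↦ ⟨hk.1, hk.2.1⟩)).2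
    ⟨j, hj1, hj2, hint, hlt⟩

lemma intCast_lt_newtonPT_of_essGap_eq_zero (hgap : nIT n i ν ν' + nB1T n i ν ν' = 0)
    (hj1 : 1 ≤ j) (hj2 : j ≤ n - 1) {m : ℤ} (hm : m < newtonPT n i ν' j) : m < newtonPT n i ν j := by
  by_contra! hle
  rcases hle.lt_or_eq with hlt | heq
  · have := nIT_pos hj1 hj2 hlt hm
    omega
  · have := nB1T_pos hj1 hj2 ⟨m, heq.symm⟩ (heq ▸ hm)
    omega

lemma newtonPT_eq_of_essGap_eq_zero (hgap : nIT n i ν ν' + nB1T n i ν ν' = 0) (hj1 : 1 ≤ j)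
    (hj2 : j ≤ n - 1) (hle : newtonPT n i ν j ≤ newtonPT n i ν' j)
    (hint : IsIntQ (newtonPT n i ν j)) : newtonPT n i ν j = newtonPT n i ν' j := by
  obtain ⟨m, hm⟩ := hint
  refine hle.eq_or_lt.resolve_right fun hlt ↦ ?_
  have := intCast_lt_newtonPT_of_essGap_eq_zero hgap hj1 hj2 (hm ▸ hlt)
  exact this.ne hm

lemma sub_mem_Ico_of_essGap_eq_zero (hgap : nIT n i ν ν' + nB1T n i ν ν' = 0)
    (hsum : newtonPT n i ν n = newtonPT n i ν' n)
    (hle : ∀ j, 1 ≤ j → j ≤ n - 1 → newtonPT n i ν j ≤ newtonPT n i ν' j) (hj : j ≤ n)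
    (hint : IsIntQ (newtonPT n i ν' j)) :
    newtonPT n i ν' j - newtonPT n i ν j ∈ Set.Ico 0 1 := by
  rcases Nat.eq_zero_or_pos j with rfl | hj0
  · simp [newtonPT]
  rcases hj.eq_or_lt with rfl | hjn
  · simp [hsum]
  obtain ⟨m, hm⟩ := hint
  have := intCast_lt_newtonPT_of_essGap_eq_zero hgap hj0 (by omega) (m := m - 1)
    (by push_cast; linarith)
  push_cast at this
  exact ⟨sub_nonneg.2 (hle j hj0 (by omega)), by linarith⟩

lemma newtonPT_eq_of_ne_of_essGap_eq_zero (hν : IsTwNewton n i ν)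
    (hgap : nIT n i ν ν' + nB1T n i ν ν' = 0)
    (hle : ∀ j, 1 ≤ j → j ≤ n - 1 → newtonPT n i ν j ≤ newtonPT n i ν' j) (hj0 : 0 < j)
    (hjn : j < n) (hne : ν (j - 1) ≠ ν j) :
    IsIntQ (newtonPT n i ν' j) ∧ newtonPT n i ν j = newtonPT n i ν' j := by
  have hint := hν.2.2 j hj0 (by omega) hne
  have heq := newtonPT_eq_of_essGap_eq_zero hgap hj0 (by omega) (hle j hj0 (by omega)) hint
  exact ⟨heq ▸ hint, heq⟩

end EssGap

theorem no_essGap_zero_below_mu_twisted_general (n i : ℕ) (hi1 : 1 ≤ i)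
    (hi2 : i ≤ n - 1) (d r : ℕ) (hd : d = Nat.gcd i n) (hr : r = n / d)
    (a : ℕ → ℤ)
    (μ : ℕ → ℚ) (hμ : ∀ k, k < n → μ k = ((a (k / r) : ℤ) : ℚ)) :
    ¬ ∃ ν : ℕ → ℚ, IsTwNewton n i ν ∧ (∃ k, k < n ∧ ν k ≠ μ k) ∧
        newtonPT n i ν n = newtonPT n i μ n ∧
        (∀ j, 1 ≤ j → j ≤ n - 1 → newtonPT n i ν j ≤ newtonPT n i μ j) ∧
        nIT n i ν μ + nB1T n i ν μ = 0 := by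
  rintro ⟨ν, hν, ⟨k, hkn, hk⟩, hsum, hle, hgap⟩
  have hr2 : 2 ≤ r := hr ▸ hd ▸ Nat.two_le_div_gcd hi1 (by omega)
  have hnrd : n = r * d := by rw [hr, hd, Nat.div_mul_cancel (Nat.gcd_dvd_right i n)]
  subst hnrd
  have hμint : ∀ j ≤ r * d, IsIntQ (newtonPT (r * d) i μ j) ↔ r ∣ j := fun j hj ↦ by
    rw [isIntQ_newtonPT_iff (by omega) fun k hk ↦ ⟨_, (hμ k (by omega)).symm⟩,
      Nat.dvd_mul_iff_div_gcd_dvd hi1, ← hd, ← hr]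
  have hbreak := fun j ↦ newtonPT_eq_of_ne_of_essGap_eq_zero (j := j) hν hgap hle
  have hblock : ∀ k < r * d, ν k = ν (r * (k / r)) := apply_eq_apply_mul_div
    fun j hj0 hjn hndvd ↦ by_contra fun hne ↦ hndvd ((hμint j hjn.le).1 (hbreak j hj0 hjn hne).1)
  have hνa := eq_of_blockGap_mem_Ico hr2 (d := d) (a := a) (c := fun t ↦ ν (r * t))
    (D := fun t ↦ newtonPT (r * d) i μ (r * t) - newtonPT (r * d) i ν (r * t))
    (by simp [newtonPT]) (by simp [hsum])
    (fun t ht ↦ sub_mem_Ico_of_essGap_eq_zero hgap hsum hle (by nlinarith)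
      ((hμint _ (by nlinarith)).2 (dvd_mul_right r t)))
    (fun t ht ↦ newtonPT_sub_newtonPT_mul_succ (g := fun t ↦ (a t : ℚ)) (g' := fun t ↦ ν (r * t))
      hμ hblock ht)
    (fun t ht0 htd hDt ↦ by
      rw [← apply_mul_sub_one_eq (g := fun t ↦ ν (r * t)) hblock (by omega) ht0 htd.le]
      by_contra hne
      have hrt : r * t < r * d := Nat.mul_lt_mul_of_pos_left htd (by omega)
      exact hDt (sub_eq_zero.2 (hbreak (r * t) (by positivity) hrt hne).2.symm))
  apply hk
  have hkd : k / r < d := (Nat.div_lt_iff_lt_mul (by omega)).2 (by linarith)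
  rw [hblock k hkn, hμ k hkn, hνa _ hkd]

/-- Proposition 4.9: let `n ≥ 2`, `1 ≤ i ≤ n−1`, `d = gcd(i,n)`,
`r = n/d`, and let `μ ∈ ℤⁿ` consist of `d` blocks of length `r` with weakly decreasing
integer values `a₀ ≥ a₁ ≥ ⋯ ≥ a_{d−1}`. Then there is no `i`-twisted Newton vector
`ν ≠ μ` with `ν ≤ μ` (for the shifted partial sums) and `𝐢(ν,μ) + 𝐛₁(ν,μ) = 0`,
i.e. no `[b] < [b_{μ,max}]` with `Ess-gap([b],[b_{μ,max}]) = 0`. -/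
theorem no_essGap_zero_below_mu_twisted (n i : ℕ) (hn : 2 ≤ n) (hi1 : 1 ≤ i)
    (hi2 : i ≤ n - 1) (d r : ℕ) (hd : d = Nat.gcd i n) (hr : r = n / d)
    (a : ℕ → ℤ) (ha : ∀ k, k + 1 < d → a (k + 1) ≤ a k)
    (μ : ℕ → ℚ) (hμ : ∀ k, k < n → μ k = ((a (k / r) : ℤ) : ℚ)) :
    ¬ ∃ ν : ℕ → ℚ, IsTwNewton n i ν ∧ (∃ k, k < n ∧ ν k ≠ μ k) ∧
        newtonPT n i ν n = newtonPT n i μ n ∧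
        (∀ j, 1 ≤ j → j ≤ n - 1 → newtonPT n i ν j ≤ newtonPT n i μ j) ∧
        nIT n i ν μ + nB1T n i ν μ = 0 :=
  no_essGap_zero_below_mu_twisted_general n i hi1 hi2 d r hd hr a μ hμ
end

section
/- Let n ≥ 1 and let μ = (a₁,…,a_n) ∈ ℤⁿ with a₁ ≥ a₂ ≥ ⋯ ≥ a_n (so μ is itself a Newton vector). Then there exists a Newton vector ν with ν ≤ μ, ν ≠ μ, and 𝐢(ν,μ) + 𝐛₁(ν,μ) = 0 if and only if a_j − a_{j+1} = 1 for some 1 ≤ j ≤ n−1. (This is the assertion of §4.4 of the paper for G = GL_n: since the generic Newton point ν_{μ,max} equals μ, there exists [b] < [b_{μ,max}] with Ess-gap([b],[b_{μ,max}]) = 0 exactly when some consecutive entries of μ differ by 1.) -/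
/-!
If `a j - a (j + 1) = 1`, averaging these two entries lowers the polygon of `μ` by `1/2` at the
single abscissa `j + 1`, which leaves no lattice point between the polygons.

Conversely, as `P_μ` is integral, a vanishing essential gap forces `P_μ - 1 < P_ν` everywhere, so
wherever `P_ν < P_μ` the value `P_ν` is not an integer, hence not a vertex, and `ν` is locally
constant there. On a maximal run `p < k ≤ q` with `P_ν k < P_μ k` the slope `ν` is therefore a
constant `c`, and comparing slopes at its two ends, where the polygons meet, gives
`a p - 1 < c < a p` and `a q < c < a q + 1`. Hence `a p = a q + 1`, and the antitone sequence `a`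
takes a unit step somewhere between `p` and `q`.
-/

lemma newtonP_zero (ν : ℕ → ℚ) : newtonP ν 0 = 0 := Finset.sum_range_zero ν

lemma newtonP_succ (ν : ℕ → ℚ) (k : ℕ) : newtonP ν (k + 1) = newtonP ν k + ν k :=
  Finset.sum_range_succ ν k

lemma isIntQ_newtonP {a : ℕ → ℤ} {μ : ℕ → ℚ} (hμ : ∀ k, μ k = a k) (j : ℕ) :
    IsIntQ (newtonP μ j) :=
  ⟨∑ k ∈ Finset.range j, a k, by simp [newtonP, hμ]⟩

lemma not_isIntQ_of_lt_of_lt {z : ℤ} {x : ℚ} (h₁ : (z : ℚ) - 1 < x) (h₂ : x < z) :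
    ¬ IsIntQ x := by
  rintro ⟨m, rfl⟩
  have : z - 1 < m := by exact_mod_cast h₁
  have : m < z := by exact_mod_cast h₂
  omega

lemma NewtonLE.newtonP_le {n : ℕ} {ν ν' : ℕ → ℚ} (h : NewtonLE n ν ν') {j : ℕ} (hj : j ≤ n) :
    newtonP ν j ≤ newtonP ν' j := by
  rcases Nat.eq_zero_or_pos j with rfl | hj₀
  · simp [newtonP_zero]
  rcases hj.eq_or_lt with rfl | hjn
  · exact h.1.le
  · exact h.2 j hj₀ (by omega)

lemma NewtonLE.mem_Icc_of_newtonP_lt {n : ℕ} {ν ν' : ℕ → ℚ} (h : NewtonLE n ν ν') {k : ℕ}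
    (hkn : k ≤ n) (hk : newtonP ν k < newtonP ν' k) : 1 ≤ k ∧ k ≤ n - 1 := by
  refine ⟨Nat.pos_of_ne_zero ?_, Nat.le_sub_one_of_lt (lt_of_le_of_ne hkn ?_)⟩
  · rintro rfl; simp [newtonP_zero] at hk
  · rintro rfl; exact hk.ne h.1

lemma NewtonLE.exists_newtonP_lt {n : ℕ} {ν ν' : ℕ → ℚ} (h : NewtonLE n ν ν')
    (hne : ∃ k, k < n ∧ ν k ≠ ν' k) : ∃ j, j ≤ n ∧ newtonP ν j < newtonP ν' j := by
  by_contra! hge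
  obtain ⟨k, hk, hνk⟩ := hne
  have hPk := le_antisymm (h.newtonP_le hk.le) (hge k hk.le)
  have hPk' := le_antisymm (h.newtonP_le hk) (hge (k + 1) hk)
  rw [newtonP_succ, newtonP_succ] at hPk'
  exact hνk (by linarith)

lemma finite_setOf_int_between (x y : ℚ) : {m : ℤ | x < m ∧ (m : ℚ) < y}.Finite :=
  (Set.finite_Icc ⌈x⌉ ⌊y⌋).subset fun _ hm => ⟨Int.ceil_le.2 hm.1.le, Int.le_floor.2 hm.2.le⟩

lemma nI_eq_zero_iff {n : ℕ} {ν ν' : ℕ → ℚ} :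
    nI n ν ν' = 0 ↔ ∀ j, 1 ≤ j → j ≤ n - 1 →
      ∀ m : ℤ, ¬ (newtonP ν j < m ∧ (m : ℚ) < newtonP ν' j) := by
  have hfin : {p : ℕ × ℤ | 1 ≤ p.1 ∧ p.1 ≤ n - 1 ∧
      newtonP ν p.1 < (p.2 : ℚ) ∧ (p.2 : ℚ) < newtonP ν' p.1}.Finite := by
    refine ((Set.finite_Icc 1 (n - 1)).biUnion fun j _ =>
      (finite_setOf_int_between (newtonP ν j) (newtonP ν' j)).image (Prod.mk j)).subset ?_
    rintro ⟨j, m⟩ ⟨h₁, h₂, h₃, h₄⟩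
    exact Set.mem_biUnion ⟨h₁, h₂⟩ ⟨m, ⟨h₃, h₄⟩, rfl⟩
  rw [nI, Set.ncard_eq_zero hfin, Set.eq_empty_iff_forall_notMem]
  exact ⟨fun h j h₁ h₂ m hm => h (j, m) ⟨h₁, h₂, hm⟩,
    fun h ⟨j, m⟩ ⟨h₁, h₂, h₃, h₄⟩ => h j h₁ h₂ m ⟨h₃, h₄⟩⟩

lemma nB1_eq_zero_iff {n : ℕ} {ν ν' : ℕ → ℚ} :
    nB1 n ν ν' = 0 ↔ ∀ j, 1 ≤ j → j ≤ n - 1 →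
      IsIntQ (newtonP ν j) → ¬ newtonP ν j < newtonP ν' j := by
  have hfin : {j : ℕ | 1 ≤ j ∧ j ≤ n - 1 ∧ IsIntQ (newtonP ν j) ∧
      newtonP ν j < newtonP ν' j}.Finite :=
    (Set.finite_Icc 1 (n - 1)).subset fun _ hj => ⟨hj.1, hj.2.1⟩
  rw [nB1, Set.ncard_eq_zero hfin, Set.eq_empty_iff_forall_notMem]
  exact ⟨fun h j h₁ h₂ hint hlt => h j ⟨h₁, h₂, hint, hlt⟩,
    fun h j ⟨h₁, h₂, hint, hlt⟩ => h j h₁ h₂ hint hlt⟩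

lemma nI_add_nB1_eq_zero_iff {n : ℕ} {ν ν' : ℕ → ℚ} (hν' : ∀ j, IsIntQ (newtonP ν' j)) :
    nI n ν ν' + nB1 n ν ν' = 0 ↔
      ∀ j, 1 ≤ j → j ≤ n - 1 → newtonP ν' j - 1 < newtonP ν j := by
  rw [Nat.add_eq_zero_iff, nI_eq_zero_iff, nB1_eq_zero_iff]
  constructor
  · rintro ⟨hI, hB⟩ j h₁ h₂
    obtain ⟨z, hz⟩ := hν' j
    by_contra! hle
    rcases hle.lt_or_eq with hlt | heq
    · exact hI j h₁ h₂ (z - 1) ⟨by push_cast; linarith, by push_cast; linarith⟩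
    · exact hB j h₁ h₂ ⟨z - 1, by push_cast; linarith⟩ (by linarith)
  · intro h
    have hnot : ∀ j, 1 ≤ j → j ≤ n - 1 → ∀ x : ℚ, newtonP ν j ≤ x → x < newtonP ν' j →
        ¬ IsIntQ x := by
      intro j h₁ h₂ x hx₁ hx₂
      obtain ⟨z, hz⟩ := hν' j
      exact not_isIntQ_of_lt_of_lt (z := z) (by linarith [h j h₁ h₂]) (hz ▸ hx₂)
    exact ⟨fun j h₁ h₂ m hm => hnot j h₁ h₂ m hm.1.le hm.2 ⟨m, rfl⟩,
      fun j h₁ h₂ hint hlt => hnot j h₁ h₂ _ le_rfl hlt hint⟩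

lemma IsNewton.eq_of_newtonP_lt {n : ℕ} {ν μ : ℕ → ℚ} (hμ : ∀ j, IsIntQ (newtonP μ j))
    (hν : IsNewton n ν) (hle : NewtonLE n ν μ) (hgap : nI n ν μ + nB1 n ν μ = 0) {k : ℕ}
    (hkn : k ≤ n) (hk : newtonP ν k < newtonP μ k) : ν (k - 1) = ν k := by
  obtain ⟨h₁, h₂⟩ := hle.mem_Icc_of_newtonP_lt hkn hk
  obtain ⟨z, hz⟩ := hμ k
  by_contra hbreak
  exact not_isIntQ_of_lt_of_lt (z := z) (hz ▸ (nI_add_nB1_eq_zero_iff hμ).1 hgap k h₁ h₂)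
    (hz ▸ hk) (hν.2.2 k h₁ h₂ hbreak)

lemma exists_maximal_Ioc {P : ℕ → Prop} [DecidablePred P] {n j : ℕ} (h₀ : ¬ P 0) (hn : ¬ P n)
    (hj : P j) (hjn : j ≤ n) :
    ∃ p q, p < q ∧ q < n ∧ ¬ P p ∧ ¬ P (q + 1) ∧ ∀ k ∈ Set.Ioc p q, P k := by
  have hj₀ : j ≠ 0 := by rintro rfl; exact h₀ hj
  have hjn' : j ≠ n := by rintro rfl; exact hn hj
  have hstart : ∃ p, P (p + 1) := ⟨j - 1, by rwa [Nat.sub_add_cancel (by omega)]⟩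
  set p := Nat.find hstart
  have hpj : p ≤ j - 1 := Nat.find_min' hstart (by rwa [Nat.sub_add_cancel (by omega)])
  have hend : ∃ q, p < q ∧ ¬ P (q + 1) :=
    ⟨n - 1, by omega, by rwa [Nat.sub_add_cancel (by omega)]⟩
  set q := Nat.find hend
  obtain ⟨hpq, hq⟩ := Nat.find_spec hend
  refine ⟨p, q, hpq, ?_, ?_, hq, ?_⟩
  · have := Nat.find_min' hend (m := n - 1) ⟨by omega, by rwa [Nat.sub_add_cancel (by omega)]⟩
    omega
  · rcases Nat.eq_zero_or_pos p with hp | hp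
    · rwa [hp]
    · have := Nat.find_min hstart (m := p - 1) (by omega)
      rwa [Nat.sub_add_cancel hp] at this
  · rintro k ⟨hpk, hkq⟩
    obtain rfl | hlt := (Nat.succ_le_of_lt hpk).eq_or_lt
    · exact Nat.find_spec hstart
    · have := Nat.find_min hend (m := k - 1) (by omega)
      rw [Nat.sub_add_cancel (by omega)] at this
      by_contra hk
      exact this ⟨by omega, hk⟩

lemma eq_of_forall_mem_Ioc_sub_one_eq {α : Type*} {f : ℕ → α} {p q : ℕ} (hpq : p ≤ q)
    (h : ∀ k ∈ Set.Ioc p q, f (k - 1) = f k) : f q = f p := by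
  induction q, hpq using Nat.le_induction with
  | base => rfl
  | succ q hpq ih =>
    rw [← h (q + 1) ⟨by omega, le_rfl⟩, Nat.add_sub_cancel]
    exact ih fun k hk => h k ⟨hk.1, hk.2.trans q.le_succ⟩

lemma exists_sub_eq_one_of_antitoneOn {a : ℕ → ℤ} {p q : ℕ} (hpq : p ≤ q)
    (ha : AntitoneOn a (Set.Icc p q)) (h : a p = a q + 1) :
    ∃ j, p ≤ j ∧ j < q ∧ a j - a (j + 1) = 1 := by
  induction q, hpq using Nat.le_induction with
  | base => omega
  | succ q hpq ih =>
    have hqp : a q ≤ a p := ha ⟨le_rfl, by omega⟩ ⟨hpq, by omega⟩ hpq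
    have hq : a (q + 1) ≤ a q := ha ⟨by omega, by omega⟩ ⟨by omega, le_rfl⟩ q.le_succ
    by_cases heq : a q = a (q + 1)
    · obtain ⟨j, hj₁, hj₂, hj⟩ := ih (ha.mono (Set.Icc_subset_Icc_right q.le_succ)) (heq ▸ h)
      exact ⟨j, hj₁, hj₂.trans q.lt_succ_self, hj⟩
    · exact ⟨q, hpq, q.lt_succ_self, by omega⟩

def averageAdjacent (μ : ℕ → ℚ) (j : ℕ) : ℕ → ℚ :=
  fun k => if k = j ∨ k = j + 1 then (μ j + μ (j + 1)) / 2 else μ k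

lemma newtonP_averageAdjacent (μ : ℕ → ℚ) (j k : ℕ) :
    newtonP (averageAdjacent μ j) k =
      newtonP μ k - if k = j + 1 then (μ j - μ (j + 1)) / 2 else 0 := by
  induction k with
  | zero => simp [newtonP_zero]
  | succ k ih =>
    rw [newtonP_succ, newtonP_succ, ih, averageAdjacent]
    by_cases hk : k = j
    · subst hk
      rw [if_neg (by omega), if_pos (Or.inl rfl), if_pos rfl]
      ring
    by_cases hk' : k = j + 1
    · subst hk'
      rw [if_pos rfl, if_pos (Or.inr rfl), if_neg (by omega)]
      ring
    · rw [if_neg hk', if_neg (by omega), if_neg (by omega)]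
      ring

lemma averageAdjacent_succ_le {n : ℕ} {μ : ℕ → ℚ} (hμ : ∀ k, k + 1 < n → μ (k + 1) ≤ μ k)
    {j k : ℕ} (hj : j + 1 < n) (hk : k + 1 < n) :
    averageAdjacent μ j (k + 1) ≤ averageAdjacent μ j k := by
  have hμj := hμ j hj
  unfold averageAdjacent
  split_ifs with h₁ h₂ h₂
  · rfl
  · obtain rfl : j = k + 1 := by omega
    linarith [hμ k hk]
  · obtain rfl : k = j + 1 := by omega
    linarith [hμ (j + 1) hk]
  · exact hμ k hk

lemma exists_newton_essGap_eq_zero_of_sub_eq_one {n : ℕ} {a : ℕ → ℤ}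
    (ha : ∀ k, k + 1 < n → a (k + 1) ≤ a k) {μ : ℕ → ℚ} (hμ : ∀ k, μ k = a k) {j : ℕ}
    (hj : j + 1 < n) (hdiff : a j - a (j + 1) = 1) :
    ∃ ν, IsNewton n ν ∧ NewtonLE n ν μ ∧ (∃ k, k < n ∧ ν k ≠ μ k) ∧
      nI n ν μ + nB1 n ν μ = 0 := by
  have hμint := isIntQ_newtonP hμ
  have hμanti : ∀ k, k + 1 < n → μ (k + 1) ≤ μ k := fun k hk => by
    rw [hμ, hμ]; exact_mod_cast ha k hk
  have hμj : μ j - μ (j + 1) = 1 := by rw [hμ, hμ]; exact_mod_cast hdiff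
  set ν := averageAdjacent μ j
  have hP : ∀ k, k ≠ j + 1 → newtonP ν k = newtonP μ k := fun k hk => by
    simp [ν, newtonP_averageAdjacent, hk]
  have hPj : newtonP ν (j + 1) = newtonP μ (j + 1) - 1 / 2 := by
    rw [newtonP_averageAdjacent, if_pos rfl, hμj]
  have hPn : newtonP ν n = newtonP μ n := hP n (by omega)
  refine ⟨ν, ⟨fun k hk => averageAdjacent_succ_le hμanti hj hk, hPn ▸ hμint n, ?_⟩,
    ⟨hPn, fun k _ _ => ?_⟩, ⟨j, by omega, ?_⟩, (nI_add_nB1_eq_zero_iff hμint).2 fun k _ _ => ?_⟩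
  · intro k _ _ hne
    by_cases hk : k = j + 1
    · subst hk
      simp [ν, averageAdjacent] at hne
    · exact hP k hk ▸ hμint k
  · by_cases hk : k = j + 1
    · rw [hk, hPj]; linarith
    · rw [hP k hk]
  · simp only [ν, averageAdjacent, true_or, if_true]
    intro h; linarith
  · by_cases hk : k = j + 1
    · rw [hk, hPj]; linarith
    · rw [hP k hk]; linarith

lemma exists_sub_eq_one_of_essGap_eq_zero {n : ℕ} {a : ℕ → ℤ}
    (ha : ∀ k, k + 1 < n → a (k + 1) ≤ a k) {μ ν : ℕ → ℚ} (hμ : ∀ k, μ k = a k)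
    (hν : IsNewton n ν) (hle : NewtonLE n ν μ) (hne : ∃ k, k < n ∧ ν k ≠ μ k)
    (hgap : nI n ν μ + nB1 n ν μ = 0) :
    ∃ j, j + 1 < n ∧ a j - a (j + 1) = 1 := by
  have hμint := isIntQ_newtonP hμ
  have hclose := (nI_add_nB1_eq_zero_iff hμint).1 hgap
  obtain ⟨j, hjn, hj⟩ := hle.exists_newtonP_lt hne
  obtain ⟨p, q, hpq, hqn, hp, hq, hrun⟩ := exists_maximal_Ioc (P := fun k => newtonP ν k <
    newtonP μ k) (fun h => by simp [newtonP_zero] at h) (fun h => h.ne hle.1) hj hjn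
  have hconst : ν q = ν p := eq_of_forall_mem_Ioc_sub_one_eq hpq.le fun k hk =>
    hν.eq_of_newtonP_lt hμint hle hgap (hk.2.trans hqn.le) (hrun k hk)
  have hPp : newtonP ν p = newtonP μ p :=
    le_antisymm (hle.newtonP_le (by omega)) (not_lt.1 hp)
  have hPq : newtonP ν (q + 1) = newtonP μ (q + 1) :=
    le_antisymm (hle.newtonP_le (by omega)) (not_lt.1 hq)
  have hp₁ := hrun (p + 1) ⟨p.lt_succ_self, hpq⟩
  have hp₂ := hclose (p + 1) (by omega) (by omega)
  have hq₁ := hrun q ⟨hpq, le_rfl⟩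
  have hq₂ := hclose q (by omega) (by omega)
  rw [newtonP_succ, newtonP_succ] at hp₁ hp₂ hPq
  have h₁ : (a q : ℚ) < a p := by rw [← hμ, ← hμ]; linarith
  have h₂ : (a p : ℚ) < a q + 2 := by rw [← hμ, ← hμ]; linarith
  have hapq : a p = a q + 1 := by
    have : a q < a p := by exact_mod_cast h₁
    have : a p < a q + 2 := by exact_mod_cast h₂
    omega
  obtain ⟨i, -, hiq, hi⟩ := exists_sub_eq_one_of_antitoneOn hpq.le
    (antitoneOn_of_add_one_le Set.ordConnected_Icc fun k _ _ hk => ha k (hk.2.trans_lt hqn)) hapq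
  exact ⟨i, by omega, hi⟩

theorem exists_essGap_zero_iff_consecutive_diff_one_general (n : ℕ)
    (a : ℕ → ℤ) (ha : ∀ k, k + 1 < n → a (k + 1) ≤ a k)
    (μ : ℕ → ℚ) (hμ : ∀ k, μ k = ((a k : ℤ) : ℚ)) :
    (∃ ν : ℕ → ℚ, IsNewton n ν ∧ NewtonLE n ν μ ∧ (∃ k, k < n ∧ ν k ≠ μ k) ∧
        nI n ν μ + nB1 n ν μ = 0) ↔
      ∃ j, j + 1 < n ∧ a j - a (j + 1) = 1 :=
  ⟨fun ⟨_, hν, hle, hne, hgap⟩ => exists_sub_eq_one_of_essGap_eq_zero ha hμ hν hle hne hgap,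
    fun ⟨_, hj, hdiff⟩ => exists_newton_essGap_eq_zero_of_sub_eq_one ha hμ hj hdiff⟩

/-- §4.4 of the paper, `G = GL_n`: let `μ ∈ ℤⁿ` be weakly decreasing
(so `μ` is itself a Newton vector, equal to the generic Newton point `ν_{μ,max}`). There
exists a Newton vector `ν ≤ μ` with `ν ≠ μ` and `𝐢(ν,μ) + 𝐛₁(ν,μ) = 0` — i.e. a class
`[b] < [b_{μ,max}]` with `Ess-gap([b],[b_{μ,max}]) = 0` — iff two consecutive entries of
`μ` differ by `1`. -/
theorem exists_essGap_zero_iff_consecutive_diff_one (n : ℕ) (hn : 1 ≤ n)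
    (a : ℕ → ℤ) (ha : ∀ k, k + 1 < n → a (k + 1) ≤ a k)
    (μ : ℕ → ℚ) (hμ : ∀ k, μ k = ((a k : ℤ) : ℚ)) :
    (∃ ν : ℕ → ℚ, IsNewton n ν ∧ NewtonLE n ν μ ∧ (∃ k, k < n ∧ ν k ≠ μ k) ∧
        nI n ν μ + nB1 n ν μ = 0) ↔
      ∃ j, j + 1 < n ∧ a j - a (j + 1) = 1 :=
  exists_essGap_zero_iff_consecutive_diff_one_general n a ha μ hμ
end

section
/- Let n ≥ 2 and let μ = (a₁,…,a_n) ∈ ℤⁿ with a₁ ≥ a₂ ≥ ⋯ ≥ a_n, and suppose a_j − a_{j+1} = 1 for some 1 ≤ j ≤ n−1. Let ν ∈ ℚⁿ be obtained from μ by replacing the entries in positions j and j+1 both by a_j − 1/2. Then ν is a Newton vector with ν ≤ μ, ν ≠ μ, and 𝐢(ν,μ) + 𝐛₁(ν,μ) = 0. (This gives the explicit witness for the forward direction of the GL_n criterion of §4.4: it produces a σ-conjugacy class [b] < [b_{μ,max}] with Ess-gap([b],[b_{μ,max}]) = 0.) -/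
/-- explicit witness for the forward direction of the `GL_n` criterion of
§4.4: let `μ ∈ ℤⁿ` be weakly decreasing with `a_j − a_{j+1} = 1` (0-indexed `j`, `j+1 < n`),
and let `ν` be obtained from `μ` by replacing the entries in positions `j` and `j+1` both by
`a_j − 1/2`. Then `ν` is a Newton vector with `ν ≤ μ`, `ν ≠ μ`, and `𝐢(ν,μ) + 𝐛₁(ν,μ) = 0`. -/
theorem averaged_witness_essGap_zero (n : ℕ) (hn : 2 ≤ n)
    (a : ℕ → ℤ) (ha : ∀ k, k + 1 < n → a (k + 1) ≤ a k)
    (μ : ℕ → ℚ) (hμ : ∀ k, μ k = ((a k : ℤ) : ℚ))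
    (j : ℕ) (hj : j + 1 < n) (haj : a j - a (j + 1) = 1)
    (ν : ℕ → ℚ)
    (hν : ∀ k, ν k = if k = j ∨ k = j + 1 then (a j : ℚ) - 1 / 2 else μ k) :
    IsNewton n ν ∧ NewtonLE n ν μ ∧ (∃ k, k < n ∧ ν k ≠ μ k) ∧
      nI n ν μ + nB1 n ν μ = 0 := by
  have haj1 : (a (j+1) : ℚ) = (a j : ℚ) - 1 := by
    have : (((a j - a (j+1)) : ℤ) : ℚ) = 1 := by rw [haj]; norm_num
    push_cast at this; linarith
  have hμν : ∀ k, ν k = μ k +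
      ((if k = j then -(1/2:ℚ) else 0) + (if k = j+1 then (1/2:ℚ) else 0)) := by
    intro k
    rw [hν k]
    by_cases h1 : k = j
    · have h2 : k ≠ j + 1 := by omega
      rw [if_pos (Or.inl h1), hμ, if_pos h1, if_neg h2, h1]
      ring
    · by_cases h2 : k = j + 1
      · rw [if_pos (Or.inr h2), hμ, if_neg h1, if_pos h2, h2, haj1]
        ring
      · rw [if_neg (by tauto), if_neg h1, if_neg h2]
        ring
  have key : ∀ m, newtonP ν m = newtonP μ m + (if m = j + 1 then -(1/2:ℚ) else 0) := by
    intro m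
    have h1 : newtonP ν m = ∑ k ∈ Finset.range m, (μ k +
        ((if k = j then -(1/2:ℚ) else 0) + (if k = j+1 then (1/2:ℚ) else 0))) :=
      Finset.sum_congr rfl fun k _ => hμν k
    rw [h1, Finset.sum_add_distrib, Finset.sum_add_distrib,
        Finset.sum_ite_eq', Finset.sum_ite_eq', ← newtonP]
    simp only [Finset.mem_range]
    split_ifs with h2 h3 h4 h5 h6 h7 <;> first | (exfalso; omega) | ring
  have intPμ : ∀ m, ∃ c : ℤ, (c : ℚ) = newtonP μ m := by
    intro m
    refine ⟨∑ k ∈ Finset.range m, a k, ?_⟩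
    rw [newtonP]
    push_cast
    exact Finset.sum_congr rfl fun k _ => (hμ k).symm
  have hI : nI n ν μ = 0 := by
    have hset : {p : ℕ × ℤ | 1 ≤ p.1 ∧ p.1 ≤ n - 1 ∧
        newtonP ν p.1 < (p.2 : ℚ) ∧ (p.2 : ℚ) < newtonP μ p.1} = ∅ := by
      apply Set.eq_empty_iff_forall_notMem.mpr
      rintro ⟨q, m⟩ ⟨h1, h2, h3, h4⟩
      obtain ⟨c, hc⟩ := intPμ q
      rw [key q, ← hc] at h3
      rw [← hc] at h4
      by_cases hq : q = j + 1
      · rw [if_pos hq] at h3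
        have hmc : m < c := by exact_mod_cast h4
        have hmc1 : (m : ℚ) ≤ (c : ℚ) - 1 := by
          have : m ≤ c - 1 := by omega
          exact_mod_cast this
        linarith
      · rw [if_neg hq] at h3
        linarith
    rw [nI, hset, Set.ncard_empty]
  have hB : nB1 n ν μ = 0 := by
    have hset : {q : ℕ | 1 ≤ q ∧ q ≤ n - 1 ∧ IsIntQ (newtonP ν q) ∧
        newtonP ν q < newtonP μ q} = ∅ := by
      apply Set.eq_empty_iff_forall_notMem.mpr
      rintro q ⟨h1, h2, ⟨c, hc⟩, h4⟩
      obtain ⟨d, hd⟩ := intPμ q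
      rw [key q, ← hd] at hc h4
      by_cases hq : q = j + 1
      · rw [if_pos hq] at hc
        have h2cd : (2 * c : ℚ) = 2 * d - 1 := by
          push_cast; linarith
        have : (2 * c : ℤ) = 2 * d - 1 := by exact_mod_cast h2cd
        omega
      · rw [if_neg hq] at h4
        linarith
    rw [nB1, hset, Set.ncard_empty]
  refine ⟨⟨?_, ?_, ?_⟩, ⟨?_, ?_⟩, ⟨j, by omega, ?_⟩, by rw [hI, hB]⟩
  · -- weakly decreasing
    intro k hk
    rw [hν k, hν (k+1)]
    have h5 : (a (k+1) : ℚ) ≤ (a k : ℚ) := by exact_mod_cast ha k hk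
    by_cases h1 : k = j
    · rw [if_pos (Or.inr (by omega : k + 1 = j + 1)), if_pos (Or.inl h1)]
    · by_cases h2 : k = j + 1
      · rw [if_neg (by omega : ¬(k + 1 = j ∨ k + 1 = j + 1)), if_pos (Or.inr h2), hμ]
        have h6 : (a k : ℚ) = (a j : ℚ) - 1 := by rw [h2]; exact haj1
        linarith
      · by_cases h3 : k + 1 = j
        · rw [if_pos (Or.inl h3), if_neg (by tauto : ¬(k = j ∨ k = j + 1)), hμ]
          rw [h3] at h5
          linarith
        · rw [if_neg (by omega : ¬(k + 1 = j ∨ k + 1 = j + 1)),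
              if_neg (by tauto : ¬(k = j ∨ k = j + 1)), hμ, hμ]
          exact h5
  · -- total sum integral
    rw [key n, if_neg (by omega : n ≠ j + 1), add_zero]
    exact intPμ n
  · -- breakpoints
    intro q h1 h2 hne
    by_cases hq : q = j + 1
    · exfalso
      apply hne
      subst hq
      rw [hν, hν]
      have e1 : j + 1 - 1 = j := by omega
      simp [e1]
    · rw [key q, if_neg hq, add_zero]
      exact intPμ q
  · rw [key n, if_neg (by omega : n ≠ j + 1), add_zero]
  · intro q h1 h2
    rw [key q]
    split_ifs <;> linarith
  · rw [hν j, hμ j, if_pos (Or.inl rfl)]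
    intro h
    have : (1 : ℚ) / 2 = 0 := by linarith
    norm_num at this
end
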